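/- arXiv:2005.09143 — 6 statements merged into one kernel-verified Lean document; each statement's English description precedes it below -/
import Mathlib

section
/- If Ψ_s < Ψ_w, then the function P ↦ R_s(P) + R_w(P) is strictly decreasing on the interval [0, p]: for all 0 ≤ P < P' ≤ p, R_s(P') + R_w(P') < R_s(P) + R_w(P). -/
/-- If `Ψ_s < Ψ_w`, then `P ↦ R_s(P) + R_w(P)` is strictly
decreasing on `[0, p]`. -/
theorem stmt_1 (B p Ψs Ψw : ℝ) (hB : 0 < B) (hp : 0 < p)
    (hΨs : 0 < Ψs) (hΨw : 0 < Ψw) (h : Ψs < Ψw) :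
    ∀ P P' : ℝ, 0 ≤ P → P < P' → P' ≤ p →
      (B / 2 * Real.logb 2 (1 + Ψs * P') +
        B / 2 * Real.logb 2 (1 + Ψw * (p - P') / (1 + Ψw * P'))) <
      (B / 2 * Real.logb 2 (1 + Ψs * P) +
        B / 2 * Real.logb 2 (1 + Ψw * (p - P) / (1 + Ψw * P))) := by
  intro P P' hP hPP' hP'
  have hP'0 : (0:ℝ) ≤ P' := le_of_lt (lt_of_le_of_lt hP hPP')
  have hd : (0:ℝ) < 1 + Ψw * P := by positivity
  have hd' : (0:ℝ) < 1 + Ψw * P' := by positivity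
  have hn : (0:ℝ) < 1 + Ψw * p := by positivity
  have hs : (0:ℝ) < 1 + Ψs * P := by positivity
  have hs' : (0:ℝ) < 1 + Ψs * P' := by positivity
  have key : ∀ Q : ℝ, (0:ℝ) < 1 + Ψw * Q →
      1 + Ψw * (p - Q) / (1 + Ψw * Q) = (1 + Ψw * p) / (1 + Ψw * Q) := by
    intro Q hQ
    field_simp
    ring
  rw [key P hd, key P' hd', ← mul_add, ← mul_add,
    ← Real.logb_mul (ne_of_gt hs') (ne_of_gt (div_pos hn hd')),
    ← Real.logb_mul (ne_of_gt hs) (ne_of_gt (div_pos hn hd))]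
  have hB2 : (0:ℝ) < B / 2 := by positivity
  apply mul_lt_mul_of_pos_left _ hB2
  apply Real.logb_lt_logb (by norm_num)
  · positivity
  · rw [mul_div_assoc', mul_div_assoc', div_lt_div_iff₀ hd' hd]
    nlinarith [mul_pos hΨw hn, sub_pos.mpr hPP', sub_pos.mpr h,
      mul_pos (mul_pos hΨw hn) (mul_pos (sub_pos.mpr h) (sub_pos.mpr hPP'))]
end

section
/- If Ψ_s > Ψ_w, then the function P ↦ R_s(P) + R_w(P) is strictly increasing on the interval [0, p]: for all 0 ≤ P < P' ≤ p, R_s(P) + R_w(P) < R_s(P') + R_w(P'). -/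
/-- If `Ψ_s > Ψ_w`, then `P ↦ R_s(P) + R_w(P)` is strictly
increasing on `[0, p]`. -/
theorem stmt_2 (B p Ψs Ψw : ℝ) (hB : 0 < B) (hp : 0 < p)
    (hΨs : 0 < Ψs) (hΨw : 0 < Ψw) (h : Ψs > Ψw) :
    ∀ P P' : ℝ, 0 ≤ P → P < P' → P' ≤ p →
      (B / 2 * Real.logb 2 (1 + Ψs * P) +
        B / 2 * Real.logb 2 (1 + Ψw * (p - P) / (1 + Ψw * P))) <
      (B / 2 * Real.logb 2 (1 + Ψs * P') +
        B / 2 * Real.logb 2 (1 + Ψw * (p - P') / (1 + Ψw * P'))) := by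
  intro P P' hP hPP' hP'p
  have hP' : (0:ℝ) ≤ P' := hP.trans hPP'.le
  have hd : (0:ℝ) < 1 + Ψw * P := by positivity
  have hd' : (0:ℝ) < 1 + Ψw * P' := by positivity
  have hs : (0:ℝ) < 1 + Ψs * P := by positivity
  have hs' : (0:ℝ) < 1 + Ψs * P' := by positivity
  have hc : (0:ℝ) < 1 + Ψw * p := by positivity
  have e1 : 1 + Ψw * (p - P) / (1 + Ψw * P) = (1 + Ψw * p) / (1 + Ψw * P) := by
    field_simp; ring
  have e2 : 1 + Ψw * (p - P') / (1 + Ψw * P') = (1 + Ψw * p) / (1 + Ψw * P') := by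
    field_simp; ring
  rw [e1, e2, Real.logb_div hc.ne' hd.ne', Real.logb_div hc.ne' hd'.ne']
  have key : (1 + Ψs * P) * (1 + Ψw * P') < (1 + Ψs * P') * (1 + Ψw * P) := by
    nlinarith
  have hlog : Real.logb 2 ((1 + Ψs * P) * (1 + Ψw * P')) <
      Real.logb 2 ((1 + Ψs * P') * (1 + Ψw * P)) :=
    Real.logb_lt_logb one_lt_two (by positivity) key
  rw [Real.logb_mul hs.ne' hd'.ne', Real.logb_mul hs'.ne' hd.ne'] at hlog
  have hB2 : (0:ℝ) < B / 2 := by linarith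
  nlinarith [mul_lt_mul_of_pos_left hlog hB2]
end

section
/- (Lemma 1, decreasing case.) Suppose Ψ_s < Ψ_w and A_s ≤ C_w. Then P = A_s maximizes the per-cell sum rate over the feasible interval: for every P with A_s ≤ P ≤ C_w, R_s(P) + R_w(P) ≤ R_s(A_s) + R_w(A_s). -/
/-! The weak user's SINR term telescopes: `1 + Ψw (p - P) / (1 + Ψw P) = (1 + Ψw p) / (1 + Ψw P)`,
so the sum rate is `B/2 · log₂ ((1 + Ψw p) · (1 + Ψs P) / (1 + Ψw P))`. For `Ψs ≤ Ψw` the ratio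
`(1 + Ψs P) / (1 + Ψw P)` is antitone on `P ≥ 0`, so the smallest feasible power `A_s` is optimal. -/

open Real Set

lemma one_add_mul_sub_div_one_add_mul {b p x : ℝ} (hx : 1 + b * x ≠ 0) :
    1 + b * (p - x) / (1 + b * x) = (1 + b * p) / (1 + b * x) := by
  field_simp
  ring

lemma antitoneOn_one_add_mul_div_one_add_mul {a b : ℝ} (hb : 0 ≤ b) (hab : a ≤ b) :
    AntitoneOn (fun x => (1 + a * x) / (1 + b * x)) (Ici 0) := by
  intro x hx y hy hxy
  have hbx : 0 < 1 + b * x := by nlinarith [mem_Ici.1 hx]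
  have hby : 0 < 1 + b * y := by nlinarith [mem_Ici.1 hy]
  rw [div_le_div_iff₀ hby hbx]
  nlinarith [mul_nonneg (sub_nonneg.2 hab) (sub_nonneg.2 hxy)]

lemma sum_rate_eq {B p a b x : ℝ} (hp : 0 ≤ p) (ha : 0 ≤ a) (hb : 0 ≤ b) (hx : 0 ≤ x) :
    B / 2 * logb 2 (1 + a * x) + B / 2 * logb 2 (1 + b * (p - x) / (1 + b * x)) =
      B / 2 * logb 2 ((1 + b * p) * ((1 + a * x) / (1 + b * x))) := by
  have hbx : 0 < 1 + b * x := by positivity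
  rw [one_add_mul_sub_div_one_add_mul hbx.ne', ← mul_add, ← logb_mul (by positivity) (by positivity)]
  ring_nf

theorem stmt_3_general (B p Ψs Ψw Rth : ℝ) (hB : 0 < B) (hp : 0 < p)
    (hΨs : 0 < Ψs) (h : Ψs < Ψw)
    (As Cw : ℝ)
    (hAs : As = max 0 (((2 : ℝ) ^ (2 * Rth / B) - 1) / Ψs)) :
    ∀ P : ℝ, As ≤ P → P ≤ Cw →
      (B / 2 * Real.logb 2 (1 + Ψs * P) +
        B / 2 * Real.logb 2 (1 + Ψw * (p - P) / (1 + Ψw * P))) ≤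
      (B / 2 * Real.logb 2 (1 + Ψs * As) +
        B / 2 * Real.logb 2 (1 + Ψw * (p - As) / (1 + Ψw * As))) := by
  intro P hAsP _
  have hΨw : 0 ≤ Ψw := (hΨs.trans h).le
  have hAs0 : 0 ≤ As := hAs ▸ le_max_left _ _
  have hP0 : 0 ≤ P := hAs0.trans hAsP
  rw [sum_rate_eq hp.le hΨs.le hΨw hP0, sum_rate_eq hp.le hΨs.le hΨw hAs0]
  have hratio : (1 + Ψs * P) / (1 + Ψw * P) ≤ (1 + Ψs * As) / (1 + Ψw * As) :=
    antitoneOn_one_add_mul_div_one_add_mul hΨw h.le hAs0 hP0 hAsP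
  gcongr
  norm_num

/-- Lemma 1, decreasing case: if `Ψ_s < Ψ_w` and `A_s ≤ C_w`,
then `P = A_s` maximizes `R_s(P) + R_w(P)` over `[A_s, C_w]`. -/
theorem stmt_3 (B p Ψs Ψw Rth : ℝ) (hB : 0 < B) (hp : 0 < p)
    (hΨs : 0 < Ψs) (hΨw : 0 < Ψw) (hRth : 0 ≤ Rth) (h : Ψs < Ψw)
    (As Cw : ℝ)
    (hAs : As = max 0 (((2 : ℝ) ^ (2 * Rth / B) - 1) / Ψs))
    (hCw : Cw = min (p / 2) ((1 + Ψw * p) / (Ψw * (2 : ℝ) ^ (2 * Rth / B)) - 1 / Ψw))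
    (hfeas : As ≤ Cw) :
    ∀ P : ℝ, As ≤ P → P ≤ Cw →
      (B / 2 * Real.logb 2 (1 + Ψs * P) +
        B / 2 * Real.logb 2 (1 + Ψw * (p - P) / (1 + Ψw * P))) ≤
      (B / 2 * Real.logb 2 (1 + Ψs * As) +
        B / 2 * Real.logb 2 (1 + Ψw * (p - As) / (1 + Ψw * As))) :=
  stmt_3_general B p Ψs Ψw Rth hB hp hΨs h As Cw hAs
end

section
/- (Feasible-set characterization for the hybrid-link problem, inequality (19).) Let c ∈ ℝ (the RF relaying rate), M = 2^{2·c/B}, A = 2^{2·R_th/B}, Ā = max(max(0, (A − 1)/Ψ_s), (1 + Ψ_s·p − M)/(Ψ_s·M)), and B_s = min(p/2, (1 + Ψ_s·p)/(Ψ_s·A) − 1/Ψ_s). Then for every real P, the four constraints 0 ≤ P ≤ p/2, R_s(P) ≥ R_th, R_{w→s}(P) ≥ R_th, and R_{w→s}(P) ≤ c hold simultaneously if and only if Ā ≤ P ≤ B_s. -/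
lemma rate_ge_iff (B Rth x : ℝ) (hB : 0 < B) (hx : 0 < x) :
    Rth ≤ B / 2 * Real.logb 2 x ↔ (2 : ℝ) ^ (2 * Rth / B) ≤ x := by
  rw [← Real.le_logb_iff_rpow_le one_lt_two hx]
  rw [div_le_iff₀ (by positivity), mul_comm]
  constructor <;> intro h <;> nlinarith

/-- feasible-set characterization for the hybrid-link problem,
inequality (19): the constraints `0 ≤ P ≤ p/2`, `R_s(P) ≥ R_th`,
`R_{w→s}(P) ≥ R_th`, and `R_{w→s}(P) ≤ c` hold simultaneously iff `Ā ≤ P ≤ B_s`. -/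
theorem stmt_8 (B p Ψs Rth c : ℝ) (hB : 0 < B) (hp : 0 < p)
    (hΨs : 0 < Ψs) (hRth : 0 ≤ Rth)
    (M A Abar Bs : ℝ)
    (hM : M = (2 : ℝ) ^ (2 * c / B))
    (hA : A = (2 : ℝ) ^ (2 * Rth / B))
    (hAbar : Abar = max (max 0 ((A - 1) / Ψs)) ((1 + Ψs * p - M) / (Ψs * M)))
    (hBs : Bs = min (p / 2) ((1 + Ψs * p) / (Ψs * A) - 1 / Ψs)) :
    ∀ P : ℝ,
      (0 ≤ P ∧ P ≤ p / 2 ∧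
        B / 2 * Real.logb 2 (1 + Ψs * P) ≥ Rth ∧
        B / 2 * Real.logb 2 (1 + Ψs * (p - P) / (1 + Ψs * P)) ≥ Rth ∧
        B / 2 * Real.logb 2 (1 + Ψs * (p - P) / (1 + Ψs * P)) ≤ c) ↔
      (Abar ≤ P ∧ P ≤ Bs) := by
  have hMpos : 0 < M := by rw [hM]; positivity
  have hApos : 0 < A := by rw [hA]; positivity
  intro P
  have key : ∀ hP0 : 0 ≤ P,
      ((B / 2 * Real.logb 2 (1 + Ψs * P) ≥ Rth ∧
        B / 2 * Real.logb 2 (1 + Ψs * (p - P) / (1 + Ψs * P)) ≥ Rth ∧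
        B / 2 * Real.logb 2 (1 + Ψs * (p - P) / (1 + Ψs * P)) ≤ c) ↔
       ((A - 1) / Ψs ≤ P ∧ (1 + Ψs * p - M) / (Ψs * M) ≤ P ∧
        P ≤ (1 + Ψs * p) / (Ψs * A) - 1 / Ψs)) := by
    intro hP0
    have h1 : (0:ℝ) < 1 + Ψs * P := by nlinarith
    have hrw : 1 + Ψs * (p - P) / (1 + Ψs * P) = (1 + Ψs * p) / (1 + Ψs * P) := by
      field_simp
      ring
    have h2 : (0:ℝ) < (1 + Ψs * p) / (1 + Ψs * P) := by positivity
    rw [hrw, ge_iff_le, ge_iff_le, rate_ge_iff B Rth _ hB h1, ← hA,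
        rate_ge_iff B Rth _ hB h2, ← hA]
    have hc : B / 2 * Real.logb 2 ((1 + Ψs * p) / (1 + Ψs * P)) ≤ c ↔
        (1 + Ψs * p) / (1 + Ψs * P) ≤ M := by
      rw [hM, ← Real.logb_le_iff_le_rpow one_lt_two h2, le_div_iff₀ (by positivity),
          mul_comm]
      constructor <;> intro h <;> nlinarith
    rw [hc]
    constructor
    · rintro ⟨ha, hb', hcc⟩
      rw [le_div_iff₀ h1] at hb'
      rw [div_le_iff₀ h1] at hcc
      refine ⟨?_, ?_, ?_⟩
      · rw [div_le_iff₀ hΨs]; nlinarith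
      · rw [div_le_iff₀ (by positivity)]; nlinarith
      · rw [le_sub_iff_add_le, le_div_iff₀ (by positivity)]
        have heq : (P + 1 / Ψs) * (Ψs * A) = A * (1 + Ψs * P) := by field_simp; ring
        linarith [heq ▸ hb']
    · rintro ⟨ha, hb', hcc⟩
      rw [div_le_iff₀ hΨs] at ha
      rw [div_le_iff₀ (by positivity)] at hb'
      rw [le_sub_iff_add_le, le_div_iff₀ (by positivity)] at hcc
      have heq : (P + 1 / Ψs) * (Ψs * A) = A * (1 + Ψs * P) := by field_simp; ring
      rw [heq] at hcc
      refine ⟨by nlinarith, ?_, ?_⟩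
      · rw [le_div_iff₀ h1]; nlinarith
      · rw [div_le_iff₀ h1]; nlinarith
  constructor
  · rintro ⟨h0, h2, h3, h4, h5⟩
    obtain ⟨k1, k2, k3⟩ := (key h0).mp ⟨h3, h4, h5⟩
    rw [hAbar, hBs]
    exact ⟨max_le (max_le h0 k1) k2, le_min h2 k3⟩
  · rintro ⟨hl, hr⟩
    rw [hAbar] at hl; rw [hBs] at hr
    have h0 : 0 ≤ P := le_trans (le_max_of_le_left (le_max_left _ _)) hl
    have k1 := le_trans (le_max_of_le_left (le_max_right _ _)) hl
    have k2 := le_trans (le_max_right _ _) hl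
    have h2 := le_trans hr (min_le_left _ _)
    have k3 := le_trans hr (min_le_right _ _)
    obtain ⟨h3, h4, h5⟩ := (key h0).mpr ⟨k1, k2, k3⟩
    exact ⟨h0, h2, h3, h4, h5⟩
end

section
/- (Minimum transmit power achieving the QoS constraints.) Let A = 2^{2·R_th/B}. There exists a real P with 0 ≤ P ≤ p, R_s(P) ≥ R_th, and R_w(P) ≥ R_th if and only if p ≥ (A² − A)/Ψ_s + (A − 1)/Ψ_w. -/
/-- minimum transmit power achieving the QoS constraints: with
`A = 2^{2·R_th/B}`, there exists `P ∈ [0, p]` with `R_s(P) ≥ R_th` and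
`R_w(P) ≥ R_th` iff `p ≥ (A² − A)/Ψ_s + (A − 1)/Ψ_w`. -/
theorem stmt_12 (B p Ψs Ψw Rth : ℝ) (hB : 0 < B) (hp : 0 < p)
    (hΨs : 0 < Ψs) (hΨw : 0 < Ψw) (hRth : 0 ≤ Rth)
    (A : ℝ) (hA : A = (2 : ℝ) ^ (2 * Rth / B)) :
    (∃ P : ℝ, 0 ≤ P ∧ P ≤ p ∧
        B / 2 * Real.logb 2 (1 + Ψs * P) ≥ Rth ∧
        B / 2 * Real.logb 2 (1 + Ψw * (p - P) / (1 + Ψw * P)) ≥ Rth) ↔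
      p ≥ (A ^ 2 - A) / Ψs + (A - 1) / Ψw := by
  have hA1 : 1 ≤ A := by
    rw [hA]
    calc (1:ℝ) = (2:ℝ) ^ (0:ℝ) := by simp
    _ ≤ (2:ℝ) ^ (2 * Rth / B) := by
        apply Real.rpow_le_rpow_of_exponent_le one_le_two
        positivity
  have key : ∀ t : ℝ, 0 < t → (B / 2 * Real.logb 2 t ≥ Rth ↔ A ≤ t) := by
    intro t ht
    rw [ge_iff_le, hA, ← Real.le_logb_iff_rpow_le one_lt_two ht, div_le_iff₀ hB]
    constructor <;> intro h <;> linarith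
  set Q : ℝ := (A - 1) / Ψs with hQdef
  set W : ℝ := (A - 1) / Ψw with hWdef
  have hQ : Ψs * Q = A - 1 := by rw [hQdef, mul_comm, div_mul_cancel₀ _ hΨs.ne']
  have hW : Ψw * W = A - 1 := by rw [hWdef, mul_comm, div_mul_cancel₀ _ hΨw.ne']
  have hQ0 : 0 ≤ Q := div_nonneg (by linarith) hΨs.le
  have hW0 : 0 ≤ W := div_nonneg (by linarith) hΨw.le
  have hgoal : (A ^ 2 - A) / Ψs + (A - 1) / Ψw = A * Q + W := by
    rw [hQdef, hWdef, ← mul_div_assoc]; ring_nf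
  rw [ge_iff_le, hgoal]
  constructor
  · rintro ⟨P, hP0, hPp, hs, hw⟩
    have hd : 0 < 1 + Ψw * P := by positivity
    have hts : 0 < 1 + Ψs * P := by positivity
    have heq : 1 + Ψw * (p - P) / (1 + Ψw * P) = (1 + Ψw * p) / (1 + Ψw * P) := by
      field_simp; ring
    have htw : 0 < 1 + Ψw * (p - P) / (1 + Ψw * P) := by
      rw [heq]; positivity
    have hs' : A ≤ 1 + Ψs * P := (key _ hts).mp hs
    have hw' : A ≤ 1 + Ψw * (p - P) / (1 + Ψw * P) := (key _ htw).mp hw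
    have h2 : A - 1 ≤ Ψw * (p - P) / (1 + Ψw * P) := by linarith
    have h3 : (A - 1) * (1 + Ψw * P) ≤ Ψw * (p - P) := by
      rwa [le_div_iff₀ hd] at h2
    have hPQ : Q ≤ P := by
      rw [hQdef, div_le_iff₀ hΨs]; nlinarith
    have hfin : Ψw * (A * Q + W) ≤ Ψw * p := by
      nlinarith [mul_le_mul_of_nonneg_left hPQ (mul_nonneg (by linarith : (0:ℝ) ≤ A) hΨw.le)]
    exact le_of_mul_le_mul_left hfin hΨw
  · intro hpS
    have hd : 0 < 1 + Ψw * Q := by positivity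
    have heq : 1 + Ψw * (p - Q) / (1 + Ψw * Q) = (1 + Ψw * p) / (1 + Ψw * Q) := by
      field_simp; ring
    refine ⟨Q, hQ0, by nlinarith, ?_, ?_⟩
    · rw [key _ (by nlinarith)]
      nlinarith
    · rw [key _ (by rw [heq]; positivity)]
      have h2 : (A - 1) * (1 + Ψw * Q) ≤ Ψw * (p - Q) := by
        nlinarith [mul_le_mul_of_nonneg_left hpS hΨw.le]
      have h3 : A - 1 ≤ Ψw * (p - Q) / (1 + Ψw * Q) := by
        rw [le_div_iff₀ hd]; linarith
      linarith
end

section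
/- (Tightness at the minimum transmit power.) Let A = 2^{2·R_th/B}. If the AP transmit power equals its minimum value p = (A² − A)/Ψ_s + (A − 1)/Ψ_w, then the power allocation P = (A − 1)/Ψ_s satisfies both QoS constraints with equality: R_s(P) = R_th and R_w(P) = R_th. -/
/-! With `A = 2^{2 R_th / B}` one has `(B/2) log₂ A = R_th`, so both claims say that the
corresponding SINR equals `A - 1`. For the strong user this is immediate from `P = (A - 1)/Ψ_s`;
for the weak user, `1 + SINR_w = (1 + Ψ_w p)/(1 + Ψ_w P)`, and the chosen `p` is exactly the one
with `1 + Ψ_w p = A (1 + Ψ_w P)`. -/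

open Real

lemma half_mul_logb_two_rpow_two_mul_div {B : ℝ} (hB : B ≠ 0) (R : ℝ) :
    B / 2 * logb 2 ((2 : ℝ) ^ (2 * R / B)) = R := by
  rw [logb_rpow two_pos (by norm_num)]
  field_simp

lemma one_add_mul_sub_one_div {Ψ : ℝ} (hΨ : Ψ ≠ 0) (A : ℝ) : 1 + Ψ * ((A - 1) / Ψ) = A := by
  field_simp
  ring

lemma one_add_sinr_eq_div {Ψ P : ℝ} (h : 1 + Ψ * P ≠ 0) (p : ℝ) :
    1 + Ψ * (p - P) / (1 + Ψ * P) = (1 + Ψ * p) / (1 + Ψ * P) := by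
  field_simp
  ring

lemma one_add_mul_min_power_eq {Ψs Ψw : ℝ} (hΨs : Ψs ≠ 0) (hΨw : Ψw ≠ 0) (A : ℝ) :
    1 + Ψw * ((A ^ 2 - A) / Ψs + (A - 1) / Ψw) = A * (1 + Ψw * ((A - 1) / Ψs)) := by
  field_simp
  ring

/-- tightness at the minimum transmit power: with
`p = (A² − A)/Ψ_s + (A − 1)/Ψ_w` and `A = 2^{2·R_th/B}`, the allocation
`P = (A − 1)/Ψ_s` satisfies both QoS constraints with equality. -/
theorem stmt_13 (B Ψs Ψw Rth : ℝ) (hB : 0 < B)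
    (hΨs : 0 < Ψs) (hΨw : 0 < Ψw) (hRth : 0 ≤ Rth)
    (A p P : ℝ)
    (hA : A = (2 : ℝ) ^ (2 * Rth / B))
    (hp : p = (A ^ 2 - A) / Ψs + (A - 1) / Ψw)
    (hP : P = (A - 1) / Ψs) :
    B / 2 * Real.logb 2 (1 + Ψs * P) = Rth ∧
    B / 2 * Real.logb 2 (1 + Ψw * (p - P) / (1 + Ψw * P)) = Rth := by
  have hA_one : 1 ≤ A := hA ▸ one_le_rpow one_le_two (by positivity)
  have hP_nonneg : 0 ≤ P := hP ▸ div_nonneg (by linarith) hΨs.le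
  have hden : 1 + Ψw * P ≠ 0 := by nlinarith
  have hstrong : 1 + Ψs * P = A := hP ▸ one_add_mul_sub_one_div hΨs.ne' A
  have hweak : 1 + Ψw * p = A * (1 + Ψw * P) := by
    rw [hp, hP]
    exact one_add_mul_min_power_eq hΨs.ne' hΨw.ne' A
  rw [hstrong, one_add_sinr_eq_div hden, hweak, mul_div_cancel_right₀ A hden, hA,
    half_mul_logb_two_rpow_two_mul_div hB.ne']
  exact ⟨rfl, rfl⟩
end
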